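/- Let n ≥ 2 and define S(n,α) = (∫_{α/√n}^{1}(1-t²)^{(n-3)/2} dt)/(2∫_0^1(1-t²)^{(n-3)/2} dt) for α ∈ (0,√n) and S(n,α) = 0 for α ≥ √n. Then for all α > 0, S(n,α) < e^{-0.45 α²}. -/

import Mathlib

/-!
The substitution `t = √(a² + (1 - a²) u²)` maps `(0, 1)` onto `(a, 1)`, with
`1 - t² = (1 - a²) (1 - u²)` and `dt = (1 - a²) (u / t) du ≤ (1 - a²) du`; hence
`∫_a^1 (1 - t²)^p ≤ (1 - a²)^(p+1) ∫_0^1 (1 - t²)^p`. For `a = α / √n`, `p = (n - 3) / 2`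
the tail ratio is thus at most `(1 - a²)^((n-1)/2) / 2 ≤ exp (-(n - 1) a² / 2) / 2`, and since
`1/2 < log 2` the factor `1/2` pays for lowering the exponent to `0.45 α² = 0.45 n a²`.
-/

open MeasureTheory Set intervalIntegral Real

theorem intervalIntegrable_one_sub_sq_rpow {p : ℝ} (hp : -1 < p) :
    IntervalIntegrable (fun t : ℝ => (1 - t ^ 2) ^ p) volume 0 1 := by
  have hsing : IntervalIntegrable (fun t : ℝ => (1 - t) ^ p) volume 0 1 := by
    simpa using ((intervalIntegrable_rpow' (a := 0) (b := 1) hp).comp_sub_left 1).symm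
  have hcont : ContinuousOn (fun t : ℝ => (1 + t) ^ p) (uIcc 0 1) := by
    refine ContinuousOn.rpow_const (by fun_prop) fun t ht => Or.inl ?_
    rw [uIcc_of_le zero_le_one] at ht
    linarith [ht.1]
  refine (hsing.mul_continuousOn hcont).congr fun t ht => ?_
  rw [uIoc_of_le zero_le_one] at ht
  rw [← mul_rpow (by linarith [ht.2]) (by linarith [ht.1])]
  ring_nf

theorem integral_one_sub_sq_rpow_pos {p : ℝ} (hp : -1 < p) :
    0 < ∫ t in (0 : ℝ)..1, (1 - t ^ 2) ^ p :=
  intervalIntegral_pos_of_pos_on (intervalIntegrable_one_sub_sq_rpow hp)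
    (fun t ht => rpow_pos_of_pos (by nlinarith [ht.1, ht.2]) p) zero_lt_one

theorem one_sub_rpow_le_exp_neg_mul {x q : ℝ} (hx : x ≤ 1) (hq : 0 ≤ q) :
    (1 - x) ^ q ≤ exp (-(q * x)) := by
  calc (1 - x) ^ q ≤ exp (-x) ^ q := rpow_le_rpow (by linarith) (one_sub_le_exp_neg x) hq
    _ = exp (-(q * x)) := by rw [← exp_mul]; ring_nf

noncomputable def capSubst (a u : ℝ) : ℝ := √(a ^ 2 + (1 - a ^ 2) * u ^ 2)

section capSubst

variable {a : ℝ}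

theorem capSubst_radicand_pos (ha : 0 < a) (ha1 : a < 1) (u : ℝ) :
    0 < a ^ 2 + (1 - a ^ 2) * u ^ 2 := by
  have : 0 ≤ (1 - a ^ 2) * u ^ 2 := mul_nonneg (by nlinarith) (sq_nonneg u)
  positivity

theorem capSubst_pos (ha : 0 < a) (ha1 : a < 1) (u : ℝ) : 0 < capSubst a u :=
  sqrt_pos.2 (capSubst_radicand_pos ha ha1 u)

theorem one_sub_capSubst_sq (ha : 0 < a) (ha1 : a < 1) (u : ℝ) :
    1 - capSubst a u ^ 2 = (1 - a ^ 2) * (1 - u ^ 2) := by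
  rw [capSubst, sq_sqrt (capSubst_radicand_pos ha ha1 u).le]
  ring

theorem capSubst_zero (ha : 0 ≤ a) : capSubst a 0 = a := by
  simp [capSubst, sqrt_sq ha]

theorem capSubst_one : capSubst a 1 = 1 := by
  simp [capSubst]

theorem le_capSubst {u : ℝ} (hu : u ^ 2 ≤ 1) : u ≤ capSubst a u :=
  (le_abs_self u).trans <| abs_le_sqrt <| by
    nlinarith [mul_nonneg (sq_nonneg a) (sub_nonneg.2 hu)]

theorem strictMonoOn_capSubst (ha1 : a ^ 2 < 1) : StrictMonoOn (capSubst a) (Ici 0) :=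
  fun x hx y _ hxy => by
    have : x ^ 2 < y ^ 2 := by nlinarith [mem_Ici.1 hx]
    exact sqrt_lt_sqrt (by nlinarith [sq_nonneg x]) (by nlinarith)

theorem image_capSubst_Ioo (ha : 0 < a) (ha1 : a < 1) : capSubst a '' Ioo 0 1 = Ioo a 1 := by
  have hmono := strictMonoOn_capSubst (a := a) (by nlinarith)
  refine Subset.antisymm ?_ ?_
  · rintro _ ⟨u, hu, rfl⟩
    constructor
    · simpa [capSubst_zero ha.le] using hmono (mem_Ici.2 le_rfl) (mem_Ici.2 hu.1.le) hu.1
    · simpa [capSubst_one] using hmono (mem_Ici.2 hu.1.le) (mem_Ici.2 zero_le_one) hu.2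
  · have hcont : Continuous (capSubst a) := by unfold capSubst; fun_prop
    simpa [capSubst_zero ha.le, capSubst_one] using
      intermediate_value_Ioo zero_le_one hcont.continuousOn

theorem hasDerivAt_capSubst (ha : 0 < a) (ha1 : a < 1) (u : ℝ) :
    HasDerivAt (capSubst a) ((1 - a ^ 2) * u / capSubst a u) u := by
  have hrad : HasDerivAt (fun v => a ^ 2 + (1 - a ^ 2) * v ^ 2) ((1 - a ^ 2) * (2 * u)) u := by
    simpa using ((hasDerivAt_pow 2 u).const_mul (1 - a ^ 2)).const_add (a ^ 2)
  refine (hrad.sqrt (capSubst_radicand_pos ha ha1 u).ne').congr_deriv ?_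
  rw [mul_left_comm, mul_div_mul_left _ _ two_ne_zero, capSubst]

theorem capSubst_deriv_mul_rpow_le (ha : 0 < a) (ha1 : a < 1) {u : ℝ} (hu : u ∈ Ioo 0 1)
    (p : ℝ) :
    (1 - a ^ 2) * u / capSubst a u * (1 - capSubst a u ^ 2) ^ p ≤
      (1 - a ^ 2) ^ (p + 1) * (1 - u ^ 2) ^ p := by
  have hc : 0 < 1 - a ^ 2 := by nlinarith
  have hu2 : 0 < 1 - u ^ 2 := by nlinarith [hu.1, hu.2]
  have hfactor : (1 - a ^ 2) * u / capSubst a u ≤ 1 - a ^ 2 := by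
    rw [div_le_iff₀ (capSubst_pos ha ha1 u)]
    exact mul_le_mul_of_nonneg_left (by simpa using le_capSubst (sub_nonneg.1 hu2.le)) hc.le
  rw [one_sub_capSubst_sq ha ha1, mul_rpow hc.le hu2.le, rpow_add_one hc.ne',
    mul_comm _ (1 - a ^ 2), ← mul_assoc]
  gcongr

theorem integral_one_sub_sq_rpow_le {p : ℝ} (hp : -1 < p) (ha : 0 < a) (ha1 : a < 1) :
    ∫ t in a..1, (1 - t ^ 2) ^ p ≤
      (1 - a ^ 2) ^ (p + 1) * ∫ t in (0 : ℝ)..1, (1 - t ^ 2) ^ p := by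
  have hc : 0 < 1 - a ^ 2 := by nlinarith
  have hint : IntegrableOn (fun u : ℝ => (1 - u ^ 2) ^ p) (Ioo 0 1) :=
    ((intervalIntegrable_iff_integrableOn_Ioo_of_le zero_le_one).1
      (intervalIntegrable_one_sub_sq_rpow hp))
  calc ∫ t in a..1, (1 - t ^ 2) ^ p
      = ∫ t in capSubst a '' Ioo 0 1, (1 - t ^ 2) ^ p := by
        rw [image_capSubst_Ioo ha ha1, integral_of_le ha1.le, integral_Ioc_eq_integral_Ioo]
    _ = ∫ u in Ioo 0 1,
          |(1 - a ^ 2) * u / capSubst a u| • (1 - capSubst a u ^ 2) ^ p :=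
        integral_image_eq_integral_abs_deriv_smul measurableSet_Ioo
          (fun u _ => (hasDerivAt_capSubst ha ha1 u).hasDerivWithinAt)
          ((strictMonoOn_capSubst (by nlinarith)).injOn.mono
            (Ioo_subset_Icc_self.trans Icc_subset_Ici_self)) _
    _ ≤ ∫ u in Ioo 0 1, (1 - a ^ 2) ^ (p + 1) * (1 - u ^ 2) ^ p := by
        have hbase : ∀ u ∈ Ioo (0 : ℝ) 1, 0 < 1 - capSubst a u ^ 2 := fun u hu => by
          rw [one_sub_capSubst_sq ha ha1]
          exact mul_pos hc (by nlinarith [hu.1, hu.2])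
        refine integral_mono_of_nonneg ?_ (hint.const_mul _) ?_ <;>
          filter_upwards [ae_restrict_mem measurableSet_Ioo] with u hu
        · exact smul_nonneg (abs_nonneg _) (rpow_nonneg (hbase u hu).le p)
        · have := capSubst_pos ha ha1 u
          rw [smul_eq_mul, abs_of_pos (by have := hu.1; positivity)]
          exact capSubst_deriv_mul_rpow_le ha ha1 hu p
    _ = (1 - a ^ 2) ^ (p + 1) * ∫ t in (0 : ℝ)..1, (1 - t ^ 2) ^ p := by
        rw [MeasureTheory.integral_const_mul, integral_of_le zero_le_one,
          integral_Ioc_eq_integral_Ioo]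

end capSubst

theorem half_exp_neg_lt_exp_neg_mul {n x : ℝ} (hn : 0 ≤ n) (hx : 0 ≤ x) (hx1 : x ≤ 1) :
    exp (-((n - 1) / 2 * x)) / 2 < exp (-0.45 * (n * x)) := by
  have hexponent : -((n - 1) / 2 * x) < log 2 + -0.45 * (n * x) := by
    nlinarith [log_two_gt_d9, mul_nonneg hn hx]
  calc exp (-((n - 1) / 2 * x)) / 2 < exp (log 2 + -0.45 * (n * x)) / 2 := by gcongr
    _ = exp (-0.45 * (n * x)) := by rw [exp_add, exp_log two_pos]; ring

theorem stmt_13 (n : ℕ) (hn : 2 ≤ n) (α : ℝ) (hα : 0 < α) :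
    (if α < Real.sqrt n then
      (∫ t in (α / Real.sqrt n)..1, (1 - t ^ 2) ^ (((n : ℝ) - 3) / 2)) /
        (2 * ∫ t in (0 : ℝ)..1, (1 - t ^ 2) ^ (((n : ℝ) - 3) / 2))
    else 0) < Real.exp (-0.45 * α ^ 2) := by
  split_ifs with hlt
  · have hn2 : (2 : ℝ) ≤ n := by exact_mod_cast hn
    have hsqrt : 0 < √(n : ℝ) := sqrt_pos.2 (by linarith)
    have hp : -1 < ((n : ℝ) - 3) / 2 := by linarith
    set a := α / √(n : ℝ)
    set p := ((n : ℝ) - 3) / 2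
    have ha : 0 < a := div_pos hα hsqrt
    have ha1 : a < 1 := (div_lt_one hsqrt).2 hlt
    have hα2 : α ^ 2 = n * a ^ 2 := by
      rw [div_pow, sq_sqrt (by linarith)]
      field_simp
    have hD := integral_one_sub_sq_rpow_pos hp
    calc (∫ t in a..1, (1 - t ^ 2) ^ p) / (2 * ∫ t in (0 : ℝ)..1, (1 - t ^ 2) ^ p)
        ≤ (1 - a ^ 2) ^ (p + 1) * (∫ t in (0 : ℝ)..1, (1 - t ^ 2) ^ p) /
            (2 * ∫ t in (0 : ℝ)..1, (1 - t ^ 2) ^ p) := by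
          gcongr
          exact integral_one_sub_sq_rpow_le hp ha ha1
      _ = (1 - a ^ 2) ^ (p + 1) / 2 := by field_simp
      _ ≤ exp (-((p + 1) * a ^ 2)) / 2 := by
          gcongr
          exact one_sub_rpow_le_exp_neg_mul (by nlinarith) (by linarith)
      _ < exp (-0.45 * α ^ 2) := by
          rw [hα2]
          convert half_exp_neg_lt_exp_neg_mul (n := n) (by linarith) (sq_nonneg a) (by nlinarith)
            using 4
          ring
  · exact exp_pos _
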